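/- For all s < k (with N > k), one has ℙ-almost surely g^{(k)}φ^{(s)} = 0 and (g^{(k)})^T φ^{(s)} = 0. -/

import Mathlib

open MeasureTheory ProbabilityTheory Filter
open scoped ENNReal NNReal BigOperators

noncomputable section

namespace SKMorita

/-- The standard Gaussian measure on `ℝ`. -/
def stdG : Measure ℝ := gaussianReal 0 1

/-- `Th x = tanh (h + β x)`. -/
def Th (β h x : ℝ) : ℝ := Real.tanh (h + β * x)

/-- `ψ(t) = E[Th(√t Z + √(q−t) Z') Th(√t Z + √(q−t) Z'')]`. -/
def psi (β h q t : ℝ) : ℝ :=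
  ∫ z, ∫ z', ∫ z'',
    Th β h (Real.sqrt t * z + Real.sqrt (q - t) * z') *
      Th β h (Real.sqrt t * z + Real.sqrt (q - t) * z'') ∂stdG ∂stdG ∂stdG

/-- `γ₁ = E[Th(√q Z)]`. -/
def gammaOne (β h q : ℝ) : ℝ := ∫ z, Th β h (Real.sqrt q * z) ∂stdG

/-- The sequence `ρ_k`, `k ≥ 1` (the value at `0` is junk):
`ρ₁ = √q γ₁` and `ρ_{k+1} = ψ(ρ_k)`. -/
def rho (β h q : ℝ) : ℕ → ℝ
  | 0 => 0
  | 1 => Real.sqrt q * gammaOne β h q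
  | (k+2) => psi β h q (rho β h q (k+1))

/-- Auxiliary recursion producing `(γ_k, Γ_k² = ∑_{j=1}^k γ_j²)`:
`γ_{k+1} = (ρ_{k+1} − Γ_k²)/√(q − Γ_k²)`. -/
def gammaAux (β h q : ℝ) : ℕ → ℝ × ℝ
  | 0 => (0, 0)
  | (k+1) =>
      let S := (gammaAux β h q k).2
      let γ := (rho β h q (k+1) - S) / Real.sqrt (q - S)
      (γ, S + γ ^ 2)

/-- The sequence `γ_k`, `k ≥ 1`. -/
def gam (β h q : ℝ) (k : ℕ) : ℝ := (gammaAux β h q k).1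

/-- The de Almeida–Thouless condition `β² E[cosh⁻⁴(h + β √q Z)] ≤ 1`. -/
def AT (β h q : ℝ) : Prop :=
  β ^ 2 * ∫ z, ((Real.cosh (h + β * Real.sqrt q * z)) ^ 4)⁻¹ ∂stdG ≤ 1

/-- `q = q(β,h) ∈ (0,1)` is the solution of the replica symmetric fixed point equation. -/
def IsFixedPoint (β h q : ℝ) : Prop :=
  0 < q ∧ q < 1 ∧ q = ∫ z, (Real.tanh (h + β * Real.sqrt q * z)) ^ 2 ∂stdG

/-- Normalized inner product `⟨x,y⟩ = N⁻¹ ∑ x_i y_i`. -/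
def ip {N : ℕ} (x y : Fin N → ℝ) : ℝ := (∑ i, x i * y i) / N

/-- Normalized norm `‖x‖ = √⟨x,x⟩`. -/
def nrm {N : ℕ} (x : Fin N → ℝ) : ℝ := Real.sqrt (ip x x)

/-- `a ⊗ b` is the matrix with entries `a_i b_j / N`. -/
def tens {N : ℕ} (a b : Fin N → ℝ) : Matrix (Fin N) (Fin N) ℝ :=
  Matrix.of fun i j => a i * b j / N

/-- The recursive construction. `chain β h q A k` is the tuple
`(g^{(k+1)}, [φ^{(k+1)},…,φ^{(1)}], m^{(k+1)}, ∑_{s=1}^{k} γ_s ζ^{(s)})`. -/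
def chain (β h q : ℝ) {N : ℕ} (A : Matrix (Fin N) (Fin N) ℝ) :
    ℕ → Matrix (Fin N) (Fin N) ℝ × List (Fin N → ℝ) × (Fin N → ℝ) × (Fin N → ℝ)
  | 0 => (A, [fun _ => 1], (fun _ => Real.sqrt q), (0 : Fin N → ℝ))
  | (k+1) =>
      let p := chain β h q A k
      let gk := p.1
      let Φ := p.2.1
      let acc := p.2.2.2
      let φk : Fin N → ℝ := Φ.headI
      let ξk := gk.mulVec φk
      let ηk := gk.transpose.mulVec φk
      let ζk : Fin N → ℝ := fun i => (ξk i + ηk i) / Real.sqrt 2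
      let hnew : Fin N → ℝ := fun i =>
        h + β * acc i + β * Real.sqrt (q - (gammaAux β h q k).2) * ζk i
      let mnew : Fin N → ℝ := fun i => Real.tanh (hnew i)
      let w : Fin N → ℝ := mnew - (Φ.map (fun φ' => ip mnew φ' • φ')).sum
      (gk - (tens ξk φk + tens φk ηk - ip φk ξk • tens φk φk),
        ((nrm w)⁻¹ • w) :: Φ, mnew, acc + gam β h q (k+1) • ζk)

/-- `g^{(k)}`, `k ≥ 1`. -/
def gmat (β h q : ℝ) {N : ℕ} (A : Matrix (Fin N) (Fin N) ℝ) (k : ℕ) :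
    Matrix (Fin N) (Fin N) ℝ := (chain β h q A (k-1)).1

/-- `φ^{(k)}`, `k ≥ 1`. -/
def phiv (β h q : ℝ) {N : ℕ} (A : Matrix (Fin N) (Fin N) ℝ) (k : ℕ) : Fin N → ℝ :=
  (chain β h q A (k-1)).2.1.headI

/-- `m^{(k)}`, `k ≥ 1`. -/
def mv (β h q : ℝ) {N : ℕ} (A : Matrix (Fin N) (Fin N) ℝ) (k : ℕ) : Fin N → ℝ :=
  (chain β h q A (k-1)).2.2.1

/-- `ξ^{(k)} = g^{(k)} φ^{(k)}`. -/
def xiv (β h q : ℝ) {N : ℕ} (A : Matrix (Fin N) (Fin N) ℝ) (k : ℕ) : Fin N → ℝ :=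
  (gmat β h q A k).mulVec (phiv β h q A k)

/-- `η^{(k)} = (g^{(k)})^T φ^{(k)}`. -/
def etav (β h q : ℝ) {N : ℕ} (A : Matrix (Fin N) (Fin N) ℝ) (k : ℕ) : Fin N → ℝ :=
  (gmat β h q A k).transpose.mulVec (phiv β h q A k)

/-- `ζ^{(k)} = (ξ^{(k)} + η^{(k)})/√2`. -/
def zetav (β h q : ℝ) {N : ℕ} (A : Matrix (Fin N) (Fin N) ℝ) (k : ℕ) : Fin N → ℝ :=
  fun i => (xiv β h q A k i + etav β h q A k i) / Real.sqrt 2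

/-- `h^{(k)}`, `k ≥ 2`:
`h^{(k)} = h·1 + β ∑_{s=1}^{k−2} γ_s ζ^{(s)} + β √(q − Γ_{k−2}²) ζ^{(k−1)}`. -/
def hv (β h q : ℝ) {N : ℕ} (A : Matrix (Fin N) (Fin N) ℝ) (k : ℕ) : Fin N → ℝ :=
  fun i =>
    h + β * (∑ s ∈ Finset.Icc 1 (k-2), gam β h q s * zetav β h q A s i)
      + β * Real.sqrt (q - ∑ j ∈ Finset.Icc 1 (k-2), (gam β h q j) ^ 2)
        * zetav β h q A (k-1) i

/-- `α_{ij}^{(m)} = N⁻¹ ∑_{r=1}^m φ_i^{(r)} φ_j^{(r)}`. -/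
def alphaM (β h q : ℝ) {N : ℕ} (A : Matrix (Fin N) (Fin N) ℝ) (m : ℕ)
    (i j : Fin N) : ℝ :=
  (∑ r ∈ Finset.Icc 1 m, phiv β h q A r i * phiv β h q A r j) / N

/-- The σ-field `G_k = σ(ξ^{(m)}, η^{(m)} : 1 ≤ m ≤ k)`. -/
def Gsig (β h q : ℝ) {Ω : Type*} [MeasurableSpace Ω] {N : ℕ}
    (g : Ω → Matrix (Fin N) (Fin N) ℝ) (k : ℕ) : MeasurableSpace Ω :=
  ⨆ m ∈ Finset.Icc 1 k,
    MeasurableSpace.comap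
      (fun ω => (xiv β h q (g ω) m, etav β h q (g ω) m)) inferInstance

/-- The entries of `g` are i.i.d. centered Gaussians with variance `1/N`. -/
def IsIIDGaussian {Ω : Type*} [MeasurableSpace Ω] (P : Measure Ω) (N : ℕ)
    (g : Ω → Matrix (Fin N) (Fin N) ℝ) : Prop :=
  (∀ i j, Measurable (fun ω => g ω i j)) ∧
    iIndepFun
      (fun (p : Fin N × Fin N) ω => g ω p.1 p.2) P ∧
    ∀ i j, Measure.map (fun ω => g ω i j) P = gaussianReal 0 ((N : ℝ≥0))⁻¹

/-- Spin values. -/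
def spin (b : Bool) : ℝ := if b then 1 else -1

/-- The SK partition function
`Z_N = 2^{-N} ∑_σ exp[(β/√2) ∑_{ij} g_{ij} σ_i σ_j + h ∑_i σ_i]`. -/
def ZN (β h : ℝ) {N : ℕ} (A : Matrix (Fin N) (Fin N) ℝ) : ℝ :=
  (∑ σ : Fin N → Bool,
      Real.exp (β / Real.sqrt 2 * ∑ i, ∑ j, A i j * spin (σ i) * spin (σ j)
        + h * ∑ i, spin (σ i))) / 2 ^ N

/-- The replica symmetric formula
`RS(β,h) = inf_{q' ≥ 0} (E log cosh(h + β √q' Z) + β²(1−q')²/4)`. -/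
def RS (β h : ℝ) : ℝ :=
  ⨅ q' : {x : ℝ // 0 ≤ x},
    (∫ z, Real.log (Real.cosh (h + β * Real.sqrt q'.1 * z)) ∂stdG)
      + β ^ 2 * (1 - q'.1) ^ 2 / 4

/-- `X` is, conditionally on the σ-field `G`, a Gaussian vector with conditional
mean `μ` and conditional covariance `C`, expressed through the conditional
characteristic function. -/
def CondGaussian {Ω : Type*} [MeasurableSpace Ω] (P : Measure Ω)
    (G : MeasurableSpace Ω) {ι : Type*} [Fintype ι] (X : Ω → ι → ℝ)
    (μ : Ω → ι → ℝ) (C : Ω → ι → ι → ℝ) : Prop :=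
  ∀ t : ι → ℝ,
    (P[fun ω => Complex.exp (Complex.I * ((∑ i, t i * X ω i : ℝ) : ℂ)) | G])
      =ᵐ[P] fun ω =>
        Complex.exp (Complex.I * ((∑ i, t i * μ ω i : ℝ) : ℂ)
          - (1/2 : ℂ) * ((∑ i, ∑ j, t i * t j * C ω i j : ℝ) : ℂ))

/-- Density of the chi-squared distribution with `n` degrees of freedom. -/
def chiPDF (n : ℕ) (x : ℝ) : ℝ :=
  x ^ ((n : ℝ)/2 - 1) * Real.exp (-x/2) / (2 ^ ((n : ℝ)/2) * Real.Gamma ((n : ℝ)/2))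

/-- Tail `Ξ_n(x) = ∫_x^∞ χ_n(y) dy` of the chi-squared distribution. -/
def Xi (n : ℕ) (x : ℝ) : ℝ := ∫ y in Set.Ioi x, chiPDF n y


/-! ### Auxiliary lemmas for `statement4` -/

section Aux

variable {β h q : ℝ} {N : ℕ} {A : Matrix (Fin N) (Fin N) ℝ}

lemma ip_comm (x y : Fin N → ℝ) : ip x y = ip y x := by
  simp [ip, mul_comm]

lemma ip_zero_right (x : Fin N → ℝ) : ip x 0 = 0 := by simp [ip]

lemma ip_zero_left (x : Fin N → ℝ) : ip 0 x = 0 := by simp [ip]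

lemma ip_sub_left (x y z : Fin N → ℝ) : ip (x - y) z = ip x z - ip y z := by
  simp [ip, sub_mul, Finset.sum_sub_distrib, sub_div]

lemma ip_smul_left (c : ℝ) (x y : Fin N → ℝ) : ip (c • x) y = c * ip x y := by
  simp only [ip, Pi.smul_apply, smul_eq_mul, mul_assoc, ← Finset.mul_sum, mul_div_assoc]

lemma ip_sum_left {ι : Type*} (s : Finset ι) (f : ι → Fin N → ℝ) (y : Fin N → ℝ) :
    ip (∑ i ∈ s, f i) y = ∑ i ∈ s, ip (f i) y := by
  simp only [ip, Finset.sum_apply, Finset.sum_mul, Finset.sum_div]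
  rw [Finset.sum_comm]

lemma ip_self_nonneg (x : Fin N → ℝ) : 0 ≤ ip x x := by
  apply div_nonneg _ (Nat.cast_nonneg N)
  exact Finset.sum_nonneg fun i _ => mul_self_nonneg _

lemma eq_zero_of_ip_self (x : Fin N → ℝ) (hx : ip x x = 0) : x = 0 := by
  rcases Nat.eq_zero_or_pos N with hN | hN
  · funext i; exact absurd i.isLt (by omega)
  · have hN' : (N : ℝ) ≠ 0 := Nat.cast_ne_zero.mpr (by omega)
    have hsum : (∑ i, x i * x i) = 0 := by
      have h2 := hx
      rw [ip, div_eq_zero_iff] at h2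
      tauto
    funext i
    have h3 := (Finset.sum_eq_zero_iff_of_nonneg
      (fun i _ => mul_self_nonneg (x i))).mp hsum i (Finset.mem_univ i)
    exact mul_self_eq_zero.mp h3

lemma ip_mulVec (B : Matrix (Fin N) (Fin N) ℝ) (x y : Fin N → ℝ) :
    ip (B.mulVec x) y = ip x (B.transpose.mulVec y) := by
  simp only [ip, Matrix.mulVec, dotProduct, Matrix.transpose_apply,
    Finset.sum_mul, Finset.mul_sum]
  congr 1
  rw [Finset.sum_comm]
  exact Finset.sum_congr rfl fun j _ => Finset.sum_congr rfl fun i _ => by ring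

lemma tens_mulVec (a b x : Fin N → ℝ) : (tens a b).mulVec x = ip b x • a := by
  funext i
  simp only [tens, Matrix.mulVec, dotProduct, Matrix.of_apply, ip,
    Pi.smul_apply, smul_eq_mul]
  rw [Finset.sum_congr rfl fun j _ =>
    (by ring : a i * b j / ↑N * x j = b j * x j * a i / ↑N)]
  rw [← Finset.sum_div, ← Finset.sum_mul]
  ring

lemma tens_transpose (a b : Fin N → ℝ) : (tens a b).transpose = tens b a := by
  ext i j
  simp only [tens, Matrix.transpose_apply, Matrix.of_apply]
  ring

lemma list_range_map_sum {M : Type*} [AddCommMonoid M] (n : ℕ) (g : ℕ → M) :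
    ((List.range n).map g).sum = ∑ i ∈ Finset.range n, g i := by
  induction n with
  | zero => simp
  | succ n ih =>
      rw [List.range_succ, List.map_append, List.sum_append, Finset.sum_range_succ, ih]
      simp

lemma chain_list (β h q : ℝ) {N : ℕ} (A : Matrix (Fin N) (Fin N) ℝ) (k : ℕ) :
    (chain β h q A k).2.1
      = ((List.range (k+1)).map fun i => phiv β h q A (i+1)).reverse := by
  induction k with
  | zero => rfl
  | succ k ih =>
      have h1 : (chain β h q A (k+1)).2.1
          = phiv β h q A (k+1+1) :: (chain β h q A k).2.1 := rfl
      rw [h1, List.range_succ, List.map_append, List.reverse_append, ih]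
      simp

/-- The vector used to build `φ^{(k+2)}`. -/
def mnext (β h q : ℝ) {N : ℕ} (A : Matrix (Fin N) (Fin N) ℝ) (k : ℕ) : Fin N → ℝ :=
  fun i => Real.tanh (h + β * (chain β h q A k).2.2.2 i
    + β * Real.sqrt (q - (gammaAux β h q k).2) *
      (((chain β h q A k).1.mulVec (chain β h q A k).2.1.headI i
        + (chain β h q A k).1.transpose.mulVec (chain β h q A k).2.1.headI i)
          / Real.sqrt 2))

lemma phiv_succ (β h q : ℝ) {N : ℕ} (A : Matrix (Fin N) (Fin N) ℝ) (k : ℕ) :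
    ∃ v : Fin N → ℝ,
      phiv β h q A (k+1+1) =
        (nrm (v - ∑ i ∈ Finset.range (k+1),
            ip v (phiv β h q A (i+1)) • phiv β h q A (i+1)))⁻¹
          • (v - ∑ i ∈ Finset.range (k+1),
              ip v (phiv β h q A (i+1)) • phiv β h q A (i+1)) := by
  refine ⟨mnext β h q A k, ?_⟩
  have h1 : phiv β h q A (k+1+1)
      = (nrm (mnext β h q A k -
          ((chain β h q A k).2.1.map
            (fun φ' => ip (mnext β h q A k) φ' • φ')).sum))⁻¹
        • (mnext β h q A k -
          ((chain β h q A k).2.1.map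
            (fun φ' => ip (mnext β h q A k) φ' • φ')).sum) := rfl
  rw [h1, chain_list, List.map_reverse, List.sum_reverse, List.map_map,
    list_range_map_sum]
  rfl

lemma gmat_succ (β h q : ℝ) {N : ℕ} (A : Matrix (Fin N) (Fin N) ℝ) (k : ℕ) :
    gmat β h q A (k+1+1) = gmat β h q A (k+1) -
      (tens (xiv β h q A (k+1)) (phiv β h q A (k+1))
        + tens (phiv β h q A (k+1)) (etav β h q A (k+1))
        - ip (phiv β h q A (k+1)) (xiv β h q A (k+1))
            • tens (phiv β h q A (k+1)) (phiv β h q A (k+1))) := rfl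

lemma key_lemma (β h q : ℝ) {N : ℕ} (A : Matrix (Fin N) (Fin N) ℝ) (hN : 0 < N) :
    ∀ n : ℕ,
      (∀ s t, 1 ≤ s → s ≤ n+1 → 1 ≤ t → t ≤ n+1 → s ≠ t →
        ip (phiv β h q A s) (phiv β h q A t) = 0) ∧
      (∀ s, 1 ≤ s → s ≤ n+1 →
        phiv β h q A s = 0 ∨ ip (phiv β h q A s) (phiv β h q A s) = 1) ∧
      (∀ s, 1 ≤ s → s ≤ n →
        (gmat β h q A (n+1)).mulVec (phiv β h q A s) = 0 ∧
        (gmat β h q A (n+1)).transpose.mulVec (phiv β h q A s) = 0) := by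
  intro n
  induction n with
  | zero =>
      refine ⟨fun s t hs hs' ht ht' hst => absurd (by omega : s = t) hst, ?_, ?_⟩
      · intro s hs hs'
        have hs1 : s = 1 := by omega
        subst hs1
        right
        have hphi : phiv β h q A 1 = fun _ => (1 : ℝ) := rfl
        have hN' : (N : ℝ) ≠ 0 := Nat.cast_ne_zero.mpr (by omega)
        rw [hphi]
        simp [ip]
        omega
      · intro s hs hs'; omega
  | succ n ih =>
      obtain ⟨Ha, Hb, Hc⟩ := ih
      obtain ⟨v, hv⟩ := phiv_succ β h q A n
      set w : Fin N → ℝ := v - ∑ i ∈ Finset.range (n+1),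
          ip v (phiv β h q A (i+1)) • phiv β h q A (i+1) with hw
      have ipw : ∀ s, 1 ≤ s → s ≤ n+1 → ip w (phiv β h q A s) = 0 := by
        intro s hs hs'
        rcases Hb s hs hs' with h0 | h1
        · rw [h0, ip_zero_right]
        · rw [hw, ip_sub_left, ip_sum_left,
            Finset.sum_eq_single (s-1) ?_ ?_]
          · have hs1 : s - 1 + 1 = s := by omega
            rw [hs1, ip_smul_left, h1, mul_one, sub_self]
          · intro b hb hbne
            have hb' := Finset.mem_range.mp hb
            rw [ip_smul_left,
              Ha (b+1) s (by omega) (by omega) hs hs' (by omega), mul_zero]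
          · intro hns
            exact absurd (Finset.mem_range.mpr (by omega)) hns
      have ortho_new : ∀ s, 1 ≤ s → s ≤ n+1 →
          ip (phiv β h q A (n+1+1)) (phiv β h q A s) = 0 := by
        intro s hs hs'
        rw [hv, ip_smul_left, ipw s hs hs', mul_zero]
      have hb_new : phiv β h q A (n+1+1) = 0 ∨
          ip (phiv β h q A (n+1+1)) (phiv β h q A (n+1+1)) = 1 := by
        by_cases h0 : ip w w = 0
        · left; rw [hv, eq_zero_of_ip_self w h0, smul_zero]
        · right
          have hs1 : ip ((nrm w)⁻¹ • w) ((nrm w)⁻¹ • w)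
              = (nrm w)⁻¹ * ((nrm w)⁻¹ * ip w w) := by
            rw [ip_smul_left, ip_comm, ip_smul_left, ip_comm]
          rw [hv, hs1, nrm, ← mul_assoc, ← mul_inv,
            Real.mul_self_sqrt (ip_self_nonneg w)]
          exact inv_mul_cancel₀ h0
      refine ⟨?_, ?_, ?_⟩
      · intro s t hs hs' ht ht' hst
        rcases Nat.lt_or_ge s (n+1+1) with hsle | hsge
        · rcases Nat.lt_or_ge t (n+1+1) with htle | htge
          · exact Ha s t hs (by omega) ht (by omega) hst
          · have ht2 : t = n+1+1 := by omega
            subst ht2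
            rw [ip_comm]
            exact ortho_new s hs (by omega)
        · have hs2 : s = n+1+1 := by omega
          subst hs2
          exact ortho_new t ht (by omega)
      · intro s hs hs'
        rcases Nat.lt_or_ge s (n+1+1) with hsle | hsge
        · exact Hb s hs (by omega)
        · have hs2 : s = n+1+1 := by omega
          subst hs2
          exact hb_new
      · intro s hs hsn1
        rcases Nat.lt_or_ge s (n+1) with hsn | hsn
        · -- s ≤ n
          have e1 := (Hc s hs (by omega)).1
          have e1' := (Hc s hs (by omega)).2
          have e2 : ip (phiv β h q A (n+1)) (phiv β h q A s) = 0 :=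
            Ha (n+1) s (by omega) (by omega) hs (by omega) (by omega)
          have e3 : ip (etav β h q A (n+1)) (phiv β h q A s) = 0 := by
            rw [show etav β h q A (n+1)
                = (gmat β h q A (n+1)).transpose.mulVec (phiv β h q A (n+1)) from rfl,
              ip_mulVec, Matrix.transpose_transpose, e1, ip_zero_right]
          have e4 : ip (xiv β h q A (n+1)) (phiv β h q A s) = 0 := by
            rw [show xiv β h q A (n+1)
                = (gmat β h q A (n+1)).mulVec (phiv β h q A (n+1)) from rfl,
              ip_mulVec, e1', ip_zero_right]
          constructor
          · rw [gmat_succ, Matrix.sub_mulVec, Matrix.sub_mulVec, Matrix.add_mulVec,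
              tens_mulVec, tens_mulVec, Matrix.smul_mulVec, tens_mulVec,
              e1, e2, e3]
            simp
          · rw [gmat_succ, Matrix.transpose_sub, Matrix.transpose_sub,
              Matrix.transpose_add, tens_transpose, tens_transpose,
              Matrix.transpose_smul, tens_transpose,
              Matrix.sub_mulVec, Matrix.sub_mulVec, Matrix.add_mulVec,
              tens_mulVec, tens_mulVec, Matrix.smul_mulVec, tens_mulVec,
              e1', e2, e4]
            simp
        · -- s = n+1
          have hs2 : s = n+1 := by omega
          subst hs2
          rcases Hb (n+1) (by omega) (by omega) with h0 | h1
          · constructor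
            · rw [gmat_succ, Matrix.sub_mulVec, Matrix.sub_mulVec, Matrix.add_mulVec,
                tens_mulVec, tens_mulVec, Matrix.smul_mulVec, tens_mulVec, h0]
              simp [Matrix.mulVec_zero, ip_zero_right, ip_zero_left]
            · rw [gmat_succ, Matrix.transpose_sub, Matrix.transpose_sub,
                Matrix.transpose_add, tens_transpose, tens_transpose,
                Matrix.transpose_smul, tens_transpose,
                Matrix.sub_mulVec, Matrix.sub_mulVec, Matrix.add_mulVec,
                tens_mulVec, tens_mulVec, Matrix.smul_mulVec, tens_mulVec, h0]
              simp [Matrix.mulVec_zero, ip_zero_right, ip_zero_left]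
          · have e5 : ip (etav β h q A (n+1)) (phiv β h q A (n+1))
                = ip (phiv β h q A (n+1)) (xiv β h q A (n+1)) := by
              rw [show etav β h q A (n+1)
                  = (gmat β h q A (n+1)).transpose.mulVec (phiv β h q A (n+1)) from rfl,
                ip_mulVec, Matrix.transpose_transpose]
              rfl
            have e6 : ip (xiv β h q A (n+1)) (phiv β h q A (n+1))
                = ip (phiv β h q A (n+1)) (xiv β h q A (n+1)) := ip_comm _ _
            constructor
            · rw [gmat_succ, Matrix.sub_mulVec, Matrix.sub_mulVec, Matrix.add_mulVec,
                tens_mulVec, tens_mulVec, Matrix.smul_mulVec, tens_mulVec,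
                h1, e5,
                show (gmat β h q A (n+1)).mulVec (phiv β h q A (n+1))
                  = xiv β h q A (n+1) from rfl]
              simp
            · rw [gmat_succ, Matrix.transpose_sub, Matrix.transpose_sub,
                Matrix.transpose_add, tens_transpose, tens_transpose,
                Matrix.transpose_smul, tens_transpose,
                Matrix.sub_mulVec, Matrix.sub_mulVec, Matrix.add_mulVec,
                tens_mulVec, tens_mulVec, Matrix.smul_mulVec, tens_mulVec,
                h1, e6,
                show (gmat β h q A (n+1)).transpose.mulVec (phiv β h q A (n+1))
                  = etav β h q A (n+1) from rfl]
              simp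

end Aux


theorem statement4 {Ω : Type*} [MeasurableSpace Ω] (P : Measure Ω) [IsProbabilityMeasure P]
    (β h q : ℝ) (hβ : 0 < β) (hh : 0 < h) (hq : IsFixedPoint β h q)
    (N : ℕ) (g : Ω → Matrix (Fin N) (Fin N) ℝ) (hg : IsIIDGaussian P N g)
    (s k : ℕ) (hs : 1 ≤ s) (hsk : s < k) (hkN : k < N) :
    ∀ᵐ ω ∂P,
      (gmat β h q (g ω) k).mulVec (phiv β h q (g ω) s) = 0 ∧
      (gmat β h q (g ω) k).transpose.mulVec (phiv β h q (g ω) s) = 0 := by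
  refine Filter.Eventually.of_forall fun ω => ?_
  have hN : 0 < N := by omega
  obtain ⟨-, -, Hc⟩ := key_lemma β h q (g ω) hN (k-1)
  have hk : k - 1 + 1 = k := by omega
  rw [hk] at Hc
  exact Hc s hs (by omega)


end SKMorita
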